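/- Let X_0 = {a}, X_1, ..., X_k be the similarity layers of a symmetric matrix A rooted at a. If x ∈ X_i for some 0 ≤ i ≤ k and y ∈ V \ (X_0 ∪ ... ∪ X_i), then there exists a path from a to x avoiding y in A. -/

import Mathlib

/-- The consecutive pairs of `l` avoid `z` with respect to the matrix `A`. -/
def AvoidChain {V : Type*} (A : V → V → ℝ) (z : V) (l : List V) : Prop :=
  l.Chain' fun u w => min (A u z) (A w z) < A u w

/-- `l` is a path from `x` to `y` avoiding `z` in `A`: a sequence of distinct
elements starting at `x`, ending at `y`, each consecutive pair avoiding `z`. -/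
def AvoidPath {V : Type*} (A : V → V → ℝ) (z x y : V) (l : List V) : Prop :=
  l.Nodup ∧ l.head? = some x ∧ l.getLast? = some y ∧ AvoidChain A z l

/-- `x ~^z y`: there is a path from `x` to `y` avoiding `z` in `A`. -/
def Avoids {V : Type*} (A : V → V → ℝ) (z x y : V) : Prop :=
  ∃ l, AvoidPath A z x y l

/-- `{x,y,z}` is a weighted asteroidal triple of `A`. -/
def IsWAT {V : Type*} (A : V → V → ℝ) (x y z : V) : Prop :=
  x ≠ y ∧ y ≠ z ∧ x ≠ z ∧ Avoids A z x y ∧ Avoids A x y z ∧ Avoids A y z x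

/-- `π` is a Robinson ordering of `A`. -/
def IsRobinsonOrdering {V : Type*} [Fintype V] (A : V → V → ℝ)
    (π : Fin (Fintype.card V) ≃ V) : Prop :=
  ∀ i j k : Fin (Fintype.card V), i < j → j < k →
    A (π i) (π k) ≤ min (A (π i) (π j)) (A (π j) (π k))

/-- `A` is Robinsonian: it admits a Robinson ordering. -/
def Robinsonian {V : Type*} [Fintype V] (A : V → V → ℝ) : Prop :=
  ∃ π : Fin (Fintype.card V) ≃ V, IsRobinsonOrdering A π

/-- `S` is strongly homogeneous for `A`. -/
def StronglyHomogeneous {V : Type*} [DecidableEq V] (A : V → V → ℝ) (S : Finset V) : Prop :=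
  ∀ x ∉ S, ∀ y ∈ S, ∀ z ∈ S, A x y = A x z ∧ A x y ≤ A y z

/-- `a` is critical for `A`: between any two distinct elements of `V \ {a}`
there is a path avoiding `a`. -/
def IsCritical {V : Type*} (A : V → V → ℝ) (a : V) : Prop :=
  ∀ x y : V, x ≠ a → y ≠ a → x ≠ y → Avoids A a x y

/-- The similarity layers of `A` rooted at `a`, together with the union of the
layers so far: `(simLayersAux A a n).1` is the `n`-th layer `X_n` and
`(simLayersAux A a n).2 = X_0 ∪ ⋯ ∪ X_n`. -/
def simLayersAux {V : Type*} (A : V → V → ℝ) (a : V) : ℕ → Set V × Set V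
  | 0 => ({a}, {a})
  | n + 1 =>
    let U := (simLayersAux A a n).2
    let L := { y | y ∉ U ∧ ∀ x ∈ U, ∀ z ∉ U, A x z ≤ A x y }
    (L, U ∪ L)

/-- The `n`-th similarity layer `X_n` of `A` rooted at `a`. -/
def simLayer {V : Type*} (A : V → V → ℝ) (a : V) (n : ℕ) : Set V :=
  (simLayersAux A a n).1

/-
Every element `u` of `X_0 ∪ ⋯ ∪ X_i` is joined to `a` by a path inside `X_0 ∪ ⋯ ∪ X_i` that
avoids any `y` outside this union. By induction on `i`: if `u ∈ X_{i+1}` and `y ∉ X_{i+1}`, then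
`y` fails the defining inequality of `X_{i+1}`, so some `w ∈ X_0 ∪ ⋯ ∪ X_i` and `z` outside it
satisfy `A w y < A w z ≤ A w u`; appending `u` to the path from `a` to `w` gives the path to `u`.
-/

section

variable {V : Type*} (A : V → V → ℝ)

theorem AvoidPath.singleton (z x : V) : AvoidPath A z x x [x] :=
  ⟨List.nodup_singleton x, rfl, rfl, List.isChain_singleton x⟩

variable {A}

theorem AvoidPath.concat {z x w u : V} {l : List V} (hl : AvoidPath A z x w l) (hu : u ∉ l)
    (hwu : min (A w z) (A u z) < A w u) : AvoidPath A z x u (l ++ [u]) := by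
  obtain ⟨hnodup, hhead, hlast, hchain⟩ := hl
  have hne : l ≠ [] := by rintro rfl; simp at hhead
  refine ⟨hnodup.append (List.nodup_singleton u) (by simpa using hu), ?_, by simp, ?_⟩
  · rwa [List.head?_append_of_ne_nil _ hne]
  · refine List.IsChain.append hchain (List.isChain_singleton u) ?_
    rintro p hp q ⟨⟩
    obtain rfl : p = w := by simpa [hlast] using hp.symm
    exact hwu

theorem simLayersAux_succ_snd (a : V) (n : ℕ) :
    (simLayersAux A a (n + 1)).2 = (simLayersAux A a n).2 ∪ simLayer A a (n + 1) :=
  rfl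

theorem mem_simLayer_succ {a y : V} {n : ℕ} :
    y ∈ simLayer A a (n + 1) ↔ y ∉ (simLayersAux A a n).2 ∧
      ∀ x ∈ (simLayersAux A a n).2, ∀ z ∉ (simLayersAux A a n).2, A x z ≤ A x y :=
  Iff.rfl

theorem simLayer_subset_simLayersAux_snd (a : V) (n : ℕ) :
    simLayer A a n ⊆ (simLayersAux A a n).2 := by
  cases n with
  | zero => exact subset_rfl
  | succ n => exact Set.subset_union_right

theorem exists_lt_of_notMem_simLayersAux_succ {a y : V} {n : ℕ}
    (hy : y ∉ (simLayersAux A a (n + 1)).2) :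
    ∃ w ∈ (simLayersAux A a n).2, ∀ u ∈ simLayer A a (n + 1), A w y < A w u := by
  have hyU : y ∉ (simLayersAux A a n).2 := fun h ↦ hy (Or.inl h)
  have hyL : y ∉ simLayer A a (n + 1) := fun h ↦ hy (Or.inr h)
  simp only [mem_simLayer_succ, hyU, not_false_eq_true, true_and, not_forall, not_le] at hyL
  obtain ⟨w, hw, z, hz, hwz⟩ := hyL
  exact ⟨w, hw, fun u hu ↦ hwz.trans_le (hu.2 w hw z hz)⟩

theorem exists_avoidPath_subset_simLayersAux (a : V) (n : ℕ) {u y : V}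
    (hu : u ∈ (simLayersAux A a n).2) (hy : y ∉ (simLayersAux A a n).2) :
    ∃ l, AvoidPath A y a u l ∧ ∀ v ∈ l, v ∈ (simLayersAux A a n).2 := by
  induction n generalizing u with
  | zero =>
    obtain rfl : u = a := hu
    exact ⟨[u], AvoidPath.singleton A y u, fun v hv ↦ List.mem_singleton.mp hv⟩
  | succ n ih =>
    rw [simLayersAux_succ_snd] at hu hy ⊢
    have hyU : y ∉ (simLayersAux A a n).2 := fun h ↦ hy (Or.inl h)
    rcases hu with hu | hu
    · obtain ⟨l, hl, hsub⟩ := ih hu hyU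
      exact ⟨l, hl, fun v hv ↦ Or.inl (hsub v hv)⟩
    · obtain ⟨w, hw, hwu⟩ := exists_lt_of_notMem_simLayersAux_succ hy
      obtain ⟨l, hl, hsub⟩ := ih hw hyU
      have hul : u ∉ l := fun h ↦ (mem_simLayer_succ.mp hu).1 (hsub u h)
      refine ⟨l ++ [u], hl.concat hul ((min_le_left _ _).trans_lt (hwu u hu)), ?_⟩
      simp only [List.mem_append, List.mem_singleton]
      rintro v (hv | rfl)
      exacts [Or.inl (hsub v hv), Or.inr hu]

end

theorem stmt_10_general {V : Type*} (A : V → V → ℝ)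
    (a : V)
    (i : ℕ) (x : V) (hx : x ∈ simLayer A a i)
    (y : V) (hy : y ∉ (simLayersAux A a i).2) :
    Avoids A y a x :=
  (exists_avoidPath_subset_simLayersAux a i (simLayer_subset_simLayersAux_snd a i hx) hy).imp
    fun _ h ↦ h.1

theorem stmt_10 {V : Type*} (A : V → V → ℝ)
    (hsym : ∀ u v : V, A u v = A v u) (a : V)
    (i : ℕ) (x : V) (hx : x ∈ simLayer A a i)
    (y : V) (hy : y ∉ (simLayersAux A a i).2) :
    Avoids A y a x :=
  stmt_10_general A a i x hx y hy
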